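/- arXiv:math/0702786 — 5 statements merged into one kernel-verified Lean document; each statement's English description precedes it below -/
import Mathlib

section
/- For every n ≥ 1 and all nonnegative integers l₁, l₂ ≥ 1 and v₁, v₂ ≥ 0 satisfying n = 1 + (l₁-1) + (l₂-1) + v₁ + v₂, one has f₂(l₁,l₂,v₁,v₂) ≤ n + (1/2)·⌊(n-1)/2⌋·⌊n/2⌋. -/
def f₂ (l₁ l₂ v₁ v₂ : ℚ) : ℚ :=
  1 + (l₁ - 1) + (l₂ - 1) + (l₁ - 1) * (l₂ - 1) / 2 + v₁ + v₂
    + v₁ * (l₂ - 1) / 2 + v₂ * (l₁ - 1) / 2 + v₁ * v₂ / 2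

lemma key_amgm (A B : ℤ) : A * B ≤ ((A + B) / 2) * ((A + B + 1) / 2) := by
  set q := (A + B) / 2 with hq
  have hr : (A + B) % 2 = 0 ∨ (A + B) % 2 = 1 := by omega
  have hq2 : (A + B + 1) / 2 = q + (A + B) % 2 := by omega
  clear_value q
  rw [hq2]
  rcases hr with h | h <;> rw [h]
  · have hAB : B = 2 * q - A := by omega
    rw [hAB]; nlinarith [sq_nonneg (A - q)]
  · have hAB : B = 2 * q + 1 - A := by omega
    rw [hAB]
    rcases le_or_gt A q with h' | h' <;> nlinarith

theorem stmt_3 (n l₁ l₂ v₁ v₂ : ℤ) (hn : 1 ≤ n) (hl₁ : 1 ≤ l₁) (hl₂ : 1 ≤ l₂)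
    (hv₁ : 0 ≤ v₁) (hv₂ : 0 ≤ v₂)
    (hsum : n = 1 + (l₁ - 1) + (l₂ - 1) + v₁ + v₂) :
    f₂ (l₁ : ℚ) (l₂ : ℚ) (v₁ : ℚ) (v₂ : ℚ)
      ≤ (n : ℚ) + (1 / 2) * (((n - 1) / 2 : ℤ) : ℚ) * ((n / 2 : ℤ) : ℚ) := by
  set A := l₁ - 1 + v₁ with hA
  set B := l₂ - 1 + v₂ with hB
  have h1 : (A + B) / 2 = (n - 1) / 2 := by omega
  have h2 : (A + B + 1) / 2 = n / 2 := by omega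
  have hkey : A * B ≤ ((n - 1) / 2) * (n / 2) := by
    rw [← h1, ← h2]; exact key_amgm A B
  have hQ : ((A * B : ℤ) : ℚ) ≤ ((((n - 1) / 2) * (n / 2) : ℤ) : ℚ) := by
    exact_mod_cast hkey
  push_cast at hQ
  have hnQ : (n : ℚ) = 1 + ((l₁ : ℚ) - 1) + ((l₂ : ℚ) - 1) + v₁ + v₂ := by
    exact_mod_cast congrArg (Int.cast : ℤ → ℚ) hsum
  have : f₂ (l₁ : ℚ) (l₂ : ℚ) (v₁ : ℚ) (v₂ : ℚ)
      = (n : ℚ) + (1 / 2) * (((l₁ : ℚ) - 1 + v₁) * ((l₂ : ℚ) - 1 + v₂)) := by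
    rw [hnQ]; unfold f₂; ring
  rw [this]
  have hAB : ((A : ℤ) : ℚ) * B = ((l₁ : ℚ) - 1 + v₁) * ((l₂ : ℚ) - 1 + v₂) := by
    push_cast [hA, hB]; ring
  linarith [hQ, hAB ▸ hQ]
end

section
/- For all integers l₁, l₂ ≥ 1 and v₁, v₂ ≥ 0 with n = 1 + (l₁-1) + (l₂-1) + v₁ + v₂, the maximum of f₂ subject to this constraint is attained at v₁ = v₂ = 0, l₁ = ⌊(n+1)/2⌋, l₂ = ⌊(n+2)/2⌋ (up to swapping l₁ and l₂). -/
theorem stmt_5 (n : ℤ) (hn : 1 ≤ n) :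
    IsGreatest
      {q : ℚ | ∃ l₁ l₂ v₁ v₂ : ℤ, 1 ≤ l₁ ∧ 1 ≤ l₂ ∧ 0 ≤ v₁ ∧ 0 ≤ v₂ ∧
        n = 1 + (l₁ - 1) + (l₂ - 1) + v₁ + v₂ ∧
        q = f₂ (l₁ : ℚ) (l₂ : ℚ) (v₁ : ℚ) (v₂ : ℚ)}
      (f₂ (((n + 1) / 2 : ℤ) : ℚ) (((n + 2) / 2 : ℤ) : ℚ) 0 0) := by
  constructor
  · exact ⟨(n + 1) / 2, (n + 2) / 2, 0, 0, by omega, by omega, le_refl _, le_refl _,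
      by omega, by push_cast; ring⟩
  · rintro q ⟨l₁, l₂, v₁, v₂, h1, h2, h3, h4, h5, rfl⟩
    have key : (l₁ - 1 + v₁) * (l₂ - 1 + v₂) ≤ ((n + 1) / 2 - 1) * ((n + 2) / 2 - 1) := by
      set A := l₁ - 1 + v₁ with hA
      set B := l₂ - 1 + v₂ with hB
      set a := (n + 1) / 2 - 1 with ha
      set b := (n + 2) / 2 - 1 with hb
      have hcase : A ≤ a ∨ b ≤ A := by omega
      have hab : a + b = n - 1 := by omega
      have hAB : A + B = n - 1 := by omega
      have hba : a ≤ b := by omega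
      have hA0 : 0 ≤ A := by omega
      have hB0 : 0 ≤ B := by omega
      rcases hcase with h | h
      · nlinarith [mul_nonneg (sub_nonneg.2 h) (sub_nonneg.2 (h.trans hba))]
      · nlinarith [mul_nonneg (sub_nonneg.2 h) (sub_nonneg.2 (hba.trans h))]
    have keyQ : ((l₁ : ℚ) - 1 + v₁) * ((l₂ : ℚ) - 1 + v₂)
        ≤ ((((n + 1) / 2 : ℤ) : ℚ) - 1) * ((((n + 2) / 2 : ℤ) : ℚ) - 1) := by
      exact_mod_cast key
    have h5Q : (n : ℚ) = 1 + ((l₁ : ℚ) - 1) + ((l₂ : ℚ) - 1) + v₁ + v₂ := by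
      exact_mod_cast h5
    have habQ : ((((n + 1) / 2 : ℤ) : ℚ) - 1) + ((((n + 2) / 2 : ℤ) : ℚ) - 1) = (n : ℚ) - 1 := by
      have : ((n + 1) / 2 - 1) + ((n + 2) / 2 - 1) = n - 1 := by omega
      exact_mod_cast this
    unfold f₂
    nlinarith [keyQ, h5Q, habQ]
end

section
/- Define f_d(l₁,...,l_d,v₁,...,v_d) = Σ_{I ⊆ {1,...,d}} (1/(|I|!·2^{d-|I|})) Σ_{b=0}^{2^d-1} Π_{i∈I} q_{b,i}, where q_{b,i} = l_i - 1 if the i-th bit of b is 0 and q_{b,i} = v_i if the i-th bit of b is 1. Then for all arguments, f_d(l₁+1, l₂,...,l_d, v₁-1, v₂,...,v_d) = f_d(l₁,...,l_d, v₁,...,v_d). -/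
def f_d (d : ℕ) (l v : Fin d → ℚ) : ℚ :=
  ∑ I : Finset (Fin d),
    (1 / ((Nat.factorial I.card : ℚ) * 2 ^ (d - I.card))) *
      ∑ b : Fin d → Bool, ∏ i ∈ I, (if b i then v i else l i - 1)

lemma fd_inner_sum (d : ℕ) (l v : Fin d → ℚ) (I : Finset (Fin d)) :
    (∑ b : Fin d → Bool, ∏ i ∈ I, (if b i then v i else l i - 1))
      = 2 ^ (d - I.card) * ∏ i ∈ I, (v i + (l i - 1)) := by
  classical
  have h : ∀ b : Fin d → Bool, (∏ i ∈ I, (if b i then v i else l i - 1))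
      = ∏ i : Fin d, (if i ∈ I then (if b i then v i else l i - 1) else 1) := by
    intro b
    rw [Finset.prod_ite_mem, Finset.univ_inter]
  simp_rw [h]
  rw [← Fintype.prod_sum (fun i (t : Bool) => if i ∈ I then (if t then v i else l i - 1) else 1)]
  have h2 : ∀ i : Fin d, (∑ t : Bool, if i ∈ I then (if t then v i else l i - 1) else 1)
      = if i ∈ I then v i + (l i - 1) else 2 := by
    intro i
    by_cases hi : i ∈ I <;> simp [hi]
  simp_rw [h2]
  rw [Finset.prod_ite, Finset.prod_const]
  have hf1 : Finset.univ.filter (· ∈ I) = I := by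
    ext i; simp
  have hf2 : (Finset.univ.filter (fun i => ¬ i ∈ I)).card = d - I.card := by
    have : Finset.univ.filter (fun i => ¬ i ∈ I) = Iᶜ := by ext i; simp
    rw [this, Finset.card_compl, Fintype.card_fin]
  rw [hf1, hf2, mul_comm]

theorem stmt_14 (d : ℕ) (hd : 0 < d) (l v : Fin d → ℚ) :
    f_d d (Function.update l ⟨0, hd⟩ (l ⟨0, hd⟩ + 1))
        (Function.update v ⟨0, hd⟩ (v ⟨0, hd⟩ - 1))
      = f_d d l v := by
  unfold f_d
  refine Finset.sum_congr rfl fun I _ => ?_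
  rw [fd_inner_sum, fd_inner_sum]
  have : (∏ i ∈ I, (Function.update v ⟨0, hd⟩ (v ⟨0, hd⟩ - 1) i +
      (Function.update l ⟨0, hd⟩ (l ⟨0, hd⟩ + 1) i - 1))) = ∏ i ∈ I, (v i + (l i - 1)) := by
    refine Finset.prod_congr rfl fun i _ => ?_
    by_cases hi : i = ⟨0, hd⟩
    · subst hi; simp [Function.update_self]; ring
    · simp [Function.update_of_ne hi]
  rw [this]
end

section
/- With f_d as defined, if l₁ < l_d - 1 then f_d(l₁+1, l₂,...,l_{d-1}, l_d - 1, 0,...,0) - f_d(l₁,...,l_d, 0,...,0) > 0, given l_i ≥ 1 for all i. -/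
open Finset

lemma fd_eq (d : ℕ) (l : Fin d → ℚ) :
    f_d d l (fun _ => 0) =
      ∑ I : Finset (Fin d), (∏ i ∈ I, (l i - 1)) / (Nat.factorial I.card : ℚ) := by
  unfold f_d
  refine Finset.sum_congr rfl fun I _ => ?_
  have hb : ∑ b : Fin d → Bool, ∏ i ∈ I, (if b i then (0:ℚ) else l i - 1)
      = 2 ^ (d - I.card) * ∏ i ∈ I, (l i - 1) := by
    have h1 : ∀ b : Fin d → Bool,
        (∏ i ∈ I, (if b i then (0:ℚ) else l i - 1))
          = ∏ i : Fin d, (if i ∈ I then (if b i then (0:ℚ) else l i - 1) else 1) := by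
      intro b
      rw [Finset.prod_ite_mem, Finset.univ_inter]
    simp only [h1]
    rw [← Fintype.piFinset_univ, ← Finset.prod_univ_sum (fun _ => (univ : Finset Bool))
      (fun i b => if i ∈ I then (if b then (0:ℚ) else l i - 1) else 1)]
    have h2 : ∀ i : Fin d, (∑ b : Bool, if i ∈ I then (if b then (0:ℚ) else l i - 1) else 1)
        = if i ∈ I then l i - 1 else 2 := by
      intro i; by_cases hi : i ∈ I <;> simp [hi]
    simp only [h2]
    rw [Finset.prod_ite]
    have : (univ.filter (· ∈ I)) = I := by simp
    rw [this]
    have : (univ.filter (· ∉ I)) = Iᶜ := by ext x; simp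
    rw [this, Finset.prod_const, Finset.card_compl]
    simp [mul_comm, Fintype.card_fin]
  rw [hb]
  have h2 : (2:ℚ) ^ (d - I.card) ≠ 0 := by positivity
  have hf : (Nat.factorial I.card : ℚ) ≠ 0 := by
    exact_mod_cast Nat.factorial_ne_zero _
  field_simp

lemma key (d : ℕ) (m m' : Fin d → ℚ) (a b : Fin d) (hab : a ≠ b)
    (hm : ∀ i, 0 ≤ m i)
    (heq : ∀ i, i ≠ a → i ≠ b → m' i = m i)
    (ha : m' a = m a + 1) (hb : m' b = m b - 1)
    (hlt : m a + 1 < m b) :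
    ∑ I : Finset (Fin d), (∏ i ∈ I, m i) / (Nat.factorial I.card : ℚ) <
    ∑ I : Finset (Fin d), (∏ i ∈ I, m' i) / (Nat.factorial I.card : ℚ) := by
  rw [← sub_pos, ← Finset.sum_sub_distrib]
  set D : Finset (Fin d) → ℚ :=
    fun I => (∏ i ∈ I, m' i) / (Nat.factorial I.card : ℚ)
      - (∏ i ∈ I, m i) / (Nat.factorial I.card : ℚ) with hD
  -- split
  rw [← Finset.sum_filter_add_sum_filter_not Finset.univ (fun I => a ∈ I) D,
      ← Finset.sum_filter_add_sum_filter_not (Finset.univ.filter (fun I => a ∈ I)) (fun I => b ∈ I) D,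
      ← Finset.sum_filter_add_sum_filter_not (Finset.univ.filter (fun I => ¬ a ∈ I)) (fun I => b ∈ I) D]
  have hfact : ∀ n : ℕ, (0:ℚ) < (Nat.factorial n : ℚ) := by
    intro n; exact_mod_cast Nat.factorial_pos n
  -- the neither sum is zero
  have hnn : ∑ I ∈ (Finset.univ.filter (fun I => ¬ a ∈ I)).filter (fun I => ¬ b ∈ I), D I = 0 := by
    refine Finset.sum_eq_zero fun I hI => ?_
    simp only [Finset.mem_filter] at hI
    have : ∏ i ∈ I, m' i = ∏ i ∈ I, m i := by
      refine Finset.prod_congr rfl fun i hi => heq i ?_ ?_ <;> rintro rfl <;> tauto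
    simp [hD, this]
  -- a-only terms
  have haonly : ∀ I ∈ (Finset.univ.filter (fun I => a ∈ I)).filter (fun I => ¬ b ∈ I),
      D I = (∏ i ∈ I.erase a, m i) / (Nat.factorial I.card : ℚ) := by
    intro I hI
    simp only [Finset.mem_filter] at hI
    obtain ⟨⟨-, haI⟩, hbI⟩ := hI
    have e1 : ∏ i ∈ I, m' i = (m a + 1) * ∏ i ∈ I.erase a, m i := by
      rw [← Finset.mul_prod_erase I m' haI, ha]
      congr 1
      refine Finset.prod_congr rfl fun i hi => heq i (Finset.ne_of_mem_erase hi) ?_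
      rintro rfl; exact hbI (Finset.mem_of_mem_erase hi)
    have e2 : ∏ i ∈ I, m i = m a * ∏ i ∈ I.erase a, m i :=
      (Finset.mul_prod_erase I m haI).symm
    rw [hD]; simp only [e1, e2]; ring
  -- b-only terms
  have hbonly : ∀ I ∈ (Finset.univ.filter (fun I => ¬ a ∈ I)).filter (fun I => b ∈ I),
      D I = -((∏ i ∈ I.erase b, m i) / (Nat.factorial I.card : ℚ)) := by
    intro I hI
    simp only [Finset.mem_filter] at hI
    obtain ⟨⟨-, haI⟩, hbI⟩ := hI
    have e1 : ∏ i ∈ I, m' i = (m b - 1) * ∏ i ∈ I.erase b, m i := by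
      rw [← Finset.mul_prod_erase I m' hbI, hb]
      congr 1
      refine Finset.prod_congr rfl fun i hi => heq i ?_ (Finset.ne_of_mem_erase hi)
      rintro rfl; exact haI (Finset.mem_of_mem_erase hi)
    have e2 : ∏ i ∈ I, m i = m b * ∏ i ∈ I.erase b, m i :=
      (Finset.mul_prod_erase I m hbI).symm
    rw [hD]; simp only [e1, e2]; ring
  -- cancellation
  have hcancel :
      ∑ I ∈ (Finset.univ.filter (fun I => a ∈ I)).filter (fun I => ¬ b ∈ I), D I
      + ∑ I ∈ (Finset.univ.filter (fun I => ¬ a ∈ I)).filter (fun I => b ∈ I), D I = 0 := by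
    have hbij :
        ∑ I ∈ (Finset.univ.filter (fun I => a ∈ I)).filter (fun I => ¬ b ∈ I), D I
        = ∑ I ∈ (Finset.univ.filter (fun I => ¬ a ∈ I)).filter (fun I => b ∈ I), (-D I) := by
      have hba : b ≠ a := Ne.symm hab
      refine Finset.sum_nbij' (fun I => insert b (I.erase a)) (fun J => insert a (J.erase b))
        ?_ ?_ ?_ ?_ ?_
      · intro I hI
        simp only [Finset.mem_filter, Finset.mem_univ, true_and] at hI ⊢
        obtain ⟨haI, hbI⟩ := hI
        constructor
        · simp [Finset.mem_insert, Finset.mem_erase, hab]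
        · exact Finset.mem_insert_self _ _
      · intro J hJ
        simp only [Finset.mem_filter, Finset.mem_univ, true_and] at hJ ⊢
        obtain ⟨haJ, hbJ⟩ := hJ
        refine ⟨Finset.mem_insert_self _ _, ?_⟩
        simp [Finset.mem_insert, Finset.mem_erase, hba]
      · intro I hI
        simp only [Finset.mem_filter, Finset.mem_univ, true_and] at hI
        obtain ⟨haI, hbI⟩ := hI
        show insert a ((insert b (I.erase a)).erase b) = I
        rw [Finset.erase_insert (by simp [hbI]), Finset.insert_erase haI]
      · intro J hJ
        simp only [Finset.mem_filter, Finset.mem_univ, true_and] at hJ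
        obtain ⟨haJ, hbJ⟩ := hJ
        show insert b ((insert a (J.erase b)).erase a) = J
        rw [Finset.erase_insert (by simp [haJ]), Finset.insert_erase hbJ]
      · intro I hI
        have hmem := hI
        simp only [Finset.mem_filter, Finset.mem_univ, true_and] at hmem
        obtain ⟨haI, hbI⟩ := hmem
        have hJmem : insert b (I.erase a) ∈
            (Finset.univ.filter (fun I => ¬ a ∈ I)).filter (fun I => b ∈ I) := by
          simp only [Finset.mem_filter, Finset.mem_univ, true_and]
          refine ⟨by simp [Finset.mem_insert, Finset.mem_erase, hab], Finset.mem_insert_self _ _⟩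
        rw [haonly I hI, hbonly _ hJmem, neg_neg]
        have herase : (insert b (I.erase a)).erase b = I.erase a := by
          rw [Finset.erase_insert (by simp [hbI])]
        have hcard : (insert b (I.erase a)).card = I.card := by
          rw [Finset.card_insert_of_notMem (by simp [hbI]),
            Finset.card_erase_of_mem haI]
          have : 0 < I.card := Finset.card_pos.mpr ⟨a, haI⟩
          omega
        rw [herase, hcard]
    rw [hbij, ← Finset.sum_add_distrib]
    simp
  -- both-in terms
  have habD : ∀ I : Finset (Fin d), a ∈ I → b ∈ I →
      D I = (m b - m a - 1) * (∏ i ∈ (I.erase a).erase b, m i)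
        / (Nat.factorial I.card : ℚ) := by
    intro I haI hbI
    have hbIa : b ∈ I.erase a := Finset.mem_erase.mpr ⟨Ne.symm hab, hbI⟩
    have hinner : ∏ i ∈ (I.erase a).erase b, m' i = ∏ i ∈ (I.erase a).erase b, m i := by
      refine Finset.prod_congr rfl fun i hi => heq i ?_ ?_
      · exact Finset.ne_of_mem_erase (Finset.mem_of_mem_erase hi)
      · exact Finset.ne_of_mem_erase hi
    have e1 : ∏ i ∈ I, m' i
        = (m a + 1) * ((m b - 1) * ∏ i ∈ (I.erase a).erase b, m i) := by
      rw [← Finset.mul_prod_erase I m' haI, ← Finset.mul_prod_erase (I.erase a) m' hbIa,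
        ha, hb, hinner]
    have e2 : ∏ i ∈ I, m i
        = m a * (m b * ∏ i ∈ (I.erase a).erase b, m i) := by
      rw [← Finset.mul_prod_erase I m haI, ← Finset.mul_prod_erase (I.erase a) m hbIa]
    rw [hD]; simp only [e1, e2]; ring
  have hpos : 0 < ∑ I ∈ (Finset.univ.filter (fun I => a ∈ I)).filter (fun I => b ∈ I), D I := by
    refine Finset.sum_pos' ?_ ?_
    · intro I hI
      simp only [Finset.mem_filter, Finset.mem_univ, true_and] at hI
      rw [habD I hI.1 hI.2]
      refine div_nonneg (mul_nonneg (by linarith) ?_) (le_of_lt (hfact _))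
      exact Finset.prod_nonneg fun i _ => hm i
    · refine ⟨{a, b}, ?_, ?_⟩
      · simp [Finset.mem_filter]
      · rw [habD _ (by simp) (by simp)]
        have h1 : (({a, b} : Finset (Fin d)).erase a).erase b = ∅ := by
          rw [show ({a,b} : Finset (Fin d)) = insert a {b} from rfl,
            Finset.erase_insert (by simp [hab]), Finset.erase_singleton]
        have h2 : ({a, b} : Finset (Fin d)).card = 2 := by
          rw [Finset.card_insert_of_notMem (by simp [hab]), Finset.card_singleton]
        rw [h1, h2]
        simp only [Finset.prod_empty, mul_one]
        have : (0:ℚ) < m b - m a - 1 := by linarith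
        positivity
  linarith [hcancel, hnn, hpos]


theorem stmt_15 (d : ℕ) (hd : 0 < d) (l : Fin d → ℚ)
    (hl : ∀ i, 1 ≤ l i)
    (h : l ⟨0, hd⟩ + 1 < l ⟨d - 1, by omega⟩) :
    f_d d l (fun _ => 0) <
      f_d d
        (Function.update (Function.update l ⟨0, hd⟩ (l ⟨0, hd⟩ + 1))
          ⟨d - 1, by omega⟩ (l ⟨d - 1, by omega⟩ - 1))
        (fun _ => 0) := by
  set a : Fin d := ⟨0, hd⟩ with ha'
  set b : Fin d := ⟨d - 1, by omega⟩ with hb'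
  have hab : a ≠ b := by
    intro e
    rw [e] at h
    linarith
  set l' : Fin d → ℚ :=
    Function.update (Function.update l a (l a + 1)) b (l b - 1) with hl'
  rw [fd_eq, fd_eq]
  refine key d (fun i => l i - 1) (fun i => l' i - 1) a b hab
    (fun i => by show 0 ≤ l i - 1; linarith [hl i]) ?_ ?_ ?_ ?_
  · intro i hia hib
    simp only [hl', Function.update_of_ne hib, Function.update_of_ne hia]
  · simp only [hl', Function.update_of_ne hab, Function.update_self]
    ring
  · simp only [hl', Function.update_self]
  · linarith
end

section
/- For every d ≥ 1 and n ≥ 1, among all integer tuples (l₁,...,l_d) with each l_i ≥ 1 and Σᵢ (l_i - 1) = n - 1, the quantity Σ_{I⊆{1,...,d}} (1/|I|!) Πᵢ∈I (l_i - 1) is maximized when the l_i - 1 are as equal as possible, i.e. l_i = ⌊(n-2+i+d)/d⌋ (up to permutation), and the maximum value equals Σ_{I⊆{1,...,d}} (1/|I|!) Πᵢ∈I ⌊(n-2+i)/d⌋. -/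
open Finset

noncomputable def Fs (d : ℕ) (x : Fin d → ℤ) : ℚ :=
  ∑ I : Finset (Fin d), (1 / (Nat.factorial I.card : ℚ)) * ∏ i ∈ I, ((x i : ℚ))

lemma fw_pos (k : ℕ) : 0 < (1 / (Nat.factorial k : ℚ)) := by positivity

lemma univ_eq_insert_pair {d : ℕ} (a b : Fin d) (hab : a ≠ b) :
    (univ : Finset (Fin d)) = insert a (insert b (univ \ {a, b})) := by
  ext i
  by_cases h1 : i = a <;> by_cases h2 : i = b <;> simp [h1, h2]

lemma sum_powerset_pair {M : Type*} [AddCommMonoid M] {d : ℕ} (a b : Fin d) (hab : a ≠ b)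
    (g : Finset (Fin d) → M) :
    ∑ I : Finset (Fin d), g I =
      ∑ J ∈ ((univ : Finset (Fin d)) \ {a, b}).powerset,
        (g J + g (insert b J) + (g (insert a J) + g (insert a (insert b J)))) := by
  classical
  set t := (univ : Finset (Fin d)) \ {a, b} with ht
  have hb : b ∉ t := by simp [ht]
  have ha : a ∉ insert b t := by simp [ht, hab]
  have huniv : (univ : Finset (Fin d)) = insert a (insert b t) := univ_eq_insert_pair a b hab
  rw [← Finset.powerset_univ, huniv, Finset.sum_powerset_insert ha,
    Finset.sum_powerset_insert hb, Finset.sum_powerset_insert hb, ← Finset.sum_add_distrib,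
    ← Finset.sum_add_distrib, ← Finset.sum_add_distrib]

lemma sum_pair_split {M : Type*} [AddCommMonoid M] {d : ℕ} (a b : Fin d) (hab : a ≠ b)
    (f : Fin d → M) :
    ∑ i, f i = f a + (f b + ∑ i ∈ (univ : Finset (Fin d)) \ {a, b}, f i) := by
  classical
  conv_lhs => rw [univ_eq_insert_pair a b hab]
  rw [Finset.sum_insert (by simp [hab]), Finset.sum_insert (by simp)]

lemma Fs_comp (d : ℕ) (x : Fin d → ℤ) (σ : Equiv.Perm (Fin d)) : Fs d (x ∘ σ) = Fs d x := by
  apply Fintype.sum_equiv σ.finsetCongr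
  intro I
  simp only [Equiv.finsetCongr_apply, Finset.card_map, Finset.prod_map,
    Equiv.coe_toEmbedding, Function.comp_apply]
lemma Fs_smooth (d : ℕ) (x : Fin d → ℤ) (a b : Fin d) (hab : a ≠ b)
    (hx : ∀ i, 0 ≤ x i) (h2 : x b + 2 ≤ x a) :
    Fs d x ≤ Fs d (Function.update (Function.update x a (x a - 1)) b (x b + 1)) := by
  classical
  set x' := Function.update (Function.update x a (x a - 1)) b (x b + 1) with hx'def
  have hx'a : x' a = x a - 1 := by
    simp [hx'def, Function.update_of_ne hab]
  have hx'b : x' b = x b + 1 := by simp [hx'def]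
  have hx'o : ∀ i, i ≠ a → i ≠ b → x' i = x i := by
    intro i hia hib
    simp [hx'def, Function.update_of_ne hib, Function.update_of_ne hia]
  unfold Fs
  rw [sum_powerset_pair a b hab, sum_powerset_pair a b hab]
  apply Finset.sum_le_sum
  intro J hJ
  rw [Finset.mem_powerset] at hJ
  have haJ : a ∉ J := fun h => by simpa using hJ h
  have hbJ : b ∉ J := fun h => by simpa using hJ h
  have haJ' : a ∉ insert b J := by simp [hab, haJ]
  have hpJ : ∏ i ∈ J, ((x' i : ℚ)) = ∏ i ∈ J, ((x i : ℚ)) := by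
    apply Finset.prod_congr rfl
    intro i hi
    rw [hx'o i (fun h => haJ (h ▸ hi)) (fun h => hbJ (h ▸ hi))]
  have hp0 : (0:ℚ) ≤ ∏ i ∈ J, ((x i : ℚ)) := by
    apply Finset.prod_nonneg
    intro i _
    exact_mod_cast hx i
  set p : ℚ := ∏ i ∈ J, ((x i : ℚ)) with hp
  rw [Finset.prod_insert hbJ, Finset.prod_insert haJ, Finset.prod_insert haJ',
    Finset.prod_insert hbJ, Finset.prod_insert hbJ, Finset.prod_insert haJ,
    Finset.prod_insert haJ', Finset.prod_insert hbJ,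
    Finset.card_insert_of_notMem hbJ, Finset.card_insert_of_notMem haJ,
    Finset.card_insert_of_notMem haJ', Finset.card_insert_of_notMem hbJ,
    hpJ, hx'a, hx'b]
  have hAB : ((x b : ℚ)) + 2 ≤ ((x a : ℚ)) := by exact_mod_cast h2
  have hw2 : 0 < (1 / (Nat.factorial (J.card + 1 + 1) : ℚ)) := fw_pos _
  push_cast
  nlinarith [mul_nonneg (le_of_lt hw2) hp0]

lemma sorted_eq (d : ℕ) (hd : 0 < d) (z : Fin d → ℤ) (hm : Monotone z)
    (hs : ∀ i j, z i ≤ z j + 1) (i : Fin d) :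
    z i = ((∑ j, z j) + (i : ℕ)) / (d : ℤ) := by
  have hdz : (0:ℤ) < (d:ℤ) := by exact_mod_cast hd
  have hfl : (Finset.filter (fun j => j < i) (univ : Finset (Fin d))).card = (i : ℕ) := by
    rw [show Finset.filter (fun j => j < i) (univ : Finset (Fin d)) = Finset.Iio i by
      ext j; simp]
    exact Fin.card_Iio i
  have hfg : (Finset.filter (fun j => i < j) (univ : Finset (Fin d))).card = d - 1 - (i : ℕ) := by
    rw [show Finset.filter (fun j => i < j) (univ : Finset (Fin d)) = Finset.Ioi i by
      ext j; simp]
    exact Fin.card_Ioi i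
  have h1 : (d:ℤ) * z i - (i:ℕ) ≤ ∑ j, z j := by
    have hle : ∑ j : Fin d, (z i - (if j < i then 1 else 0)) ≤ ∑ j, z j := by
      apply Finset.sum_le_sum
      intro j _
      by_cases h : j < i
      · have := hs i j; simp [h]; omega
      · simp [h]
        exact hm (not_lt.mp h)
    calc (d:ℤ) * z i - (i:ℕ)
        = ∑ j : Fin d, (z i - (if j < i then 1 else 0)) := by
          rw [Finset.sum_sub_distrib, Finset.sum_const, Finset.sum_boole, hfl]
          simp [mul_comm]
      _ ≤ _ := hle
  have h2 : ∑ j, z j ≤ (d:ℤ) * z i + ((d : ℕ) - 1 - (i:ℕ) : ℕ) := by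
    have hle : ∑ j, z j ≤ ∑ j : Fin d, (z i + (if i < j then 1 else 0)) := by
      apply Finset.sum_le_sum
      intro j _
      by_cases h : i < j
      · have := hs j i; simp [h]; omega
      · simp [h]
        exact hm (not_lt.mp h)
    calc ∑ j, z j ≤ _ := hle
      _ = (d:ℤ) * z i + ((d : ℕ) - 1 - (i:ℕ) : ℕ) := by
          rw [Finset.sum_add_distrib, Finset.sum_const, Finset.sum_boole, hfg]
          simp [mul_comm]
  have hi : (i : ℕ) < d := i.isLt
  have hcast : (((d : ℕ) - 1 - (i:ℕ) : ℕ) : ℤ) = (d:ℤ) - 1 - (i:ℕ) := by omega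
  rw [hcast] at h2
  have hcm : (d:ℤ) * z i = z i * (d:ℤ) := mul_comm _ _
  have hcm2 : (z i + 1) * (d:ℤ) = (d:ℤ) * z i + d := by ring
  apply le_antisymm
  · rw [Int.le_ediv_iff_mul_le hdz]
    omega
  · have : ((∑ j, z j) + (i : ℕ)) / (d : ℤ) < z i + 1 := by
      rw [Int.ediv_lt_iff_lt_mul hdz]
      omega
    omega

lemma sum_balanced (d : ℕ) (hd : 0 < d) (m : ℤ) :
    ∑ i : Fin d, (m + (i : ℕ)) / (d : ℤ) = m := by
  have hdz : (0:ℤ) < (d:ℤ) := by exact_mod_cast hd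
  have hdz' : (d:ℤ) ≠ 0 := ne_of_gt hdz
  obtain ⟨r, q, hm, hr0, hrd⟩ : ∃ r q : ℤ, m = d * q + r ∧ 0 ≤ r ∧ r < d :=
    ⟨m % d, m / d, by rw [Int.mul_ediv_add_emod], Int.emod_nonneg m hdz', Int.emod_lt_of_pos m hdz⟩
  have hterm : ∀ i : Fin d, (m + (i : ℕ)) / (d : ℤ)
      = q + (if (d:ℤ) ≤ r + (i:ℕ) then 1 else 0) := by
    intro i
    have hi : ((i:ℕ):ℤ) < d := by exact_mod_cast i.isLt
    have hi0 : (0:ℤ) ≤ ((i:ℕ):ℤ) := by positivity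
    have hm' : m + ((i:ℕ):ℤ) = (r + (i:ℕ)) + (d:ℤ) * q := by omega
    rw [hm', Int.add_mul_ediv_left _ _ hdz']
    by_cases h : (d:ℤ) ≤ r + (i:ℕ)
    · have h1 : (r + ((i:ℕ):ℤ)) / d = 1 := by
        rw [show r + ((i:ℕ):ℤ) = (r + (i:ℕ) - d) + (d:ℤ) * 1 by ring,
          Int.add_mul_ediv_left _ _ hdz', Int.ediv_eq_zero_of_lt (by omega) (by omega)]
        norm_num
      rw [h1]
      simp [h]
      ring
    · rw [Int.ediv_eq_zero_of_lt (by omega) (by omega)]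
      simp [h]
  rw [Finset.sum_congr rfl (fun i _ => hterm i), Finset.sum_add_distrib, Finset.sum_const,
    Finset.sum_boole]
  have hcard : (Finset.filter (fun i : Fin d => (d:ℤ) ≤ r + (i:ℕ)) univ).card = r.toNat := by
    rw [show Finset.filter (fun i : Fin d => (d:ℤ) ≤ r + (i:ℕ)) univ
        = Finset.filter (fun i : Fin d => d - r.toNat ≤ (i:ℕ)) univ by
      apply Finset.filter_congr; intro i _
      have hi : (i:ℕ) < d := i.isLt
      omega]
    rcases Nat.eq_zero_or_pos r.toNat with h0 | h0
    · rw [show Finset.filter (fun i : Fin d => d - r.toNat ≤ (i:ℕ)) univ = (∅ : Finset (Fin d)) by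
        ext j
        simp only [Finset.mem_filter, Finset.mem_univ, true_and, Finset.notMem_empty, iff_false]
        have := j.isLt
        omega]
      simp [h0]
    · rw [show Finset.filter (fun i : Fin d => d - r.toNat ≤ (i:ℕ)) univ
          = Finset.Ici (⟨d - r.toNat, by omega⟩ : Fin d) by
        ext j; simp [Fin.le_def]]
      rw [Fin.card_Ici]
      simp only [Fin.val_mk]
      omega
  rw [hcard]
  simp only [card_univ, Fintype.card_fin, nsmul_eq_mul]
  have ht : (r.toNat : ℤ) = r := Int.toNat_of_nonneg hr0
  omega

lemma terminal_case (d : ℕ) (hd : 0 < d) (n : ℤ) (x : Fin d → ℤ)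
    (hxs : (∑ i, x i) = n - 1) (hng : ∀ a b, x a ≤ x b + 1) :
    Fs d x = Fs d (fun i => (n - 2 + ((i:ℕ) + 1)) / (d:ℤ)) := by
  set σ := Tuple.sort x with hσ
  have hmono : Monotone (x ∘ σ) := Tuple.monotone_sort x
  have hzs : ∑ j, (x ∘ σ) j = n - 1 := by rw [← hxs]; exact Equiv.sum_comp σ x
  have hz : ∀ i, (x ∘ σ) i = (n - 2 + ((i:ℕ) + 1)) / (d:ℤ) := by
    intro i
    have h := sorted_eq d hd (x ∘ σ) hmono (fun i j => hng _ _) i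
    rw [hzs] at h
    rw [h]
    congr 1
    ring
  calc Fs d x = Fs d (x ∘ σ) := (Fs_comp d x σ).symm
    _ = _ := congrArg (Fs d) (funext hz)

lemma key_ineq (d : ℕ) (hd : 0 < d) (n : ℤ) :
    ∀ N : ℕ, ∀ x : Fin d → ℤ, (∀ i, 0 ≤ x i) → (∑ i, x i) = n - 1 →
      (∑ i, (x i)^2).toNat ≤ N →
      Fs d x ≤ Fs d (fun i => (n - 2 + ((i:ℕ) + 1)) / (d:ℤ)) := by
  intro N
  induction N with
  | zero =>
    intro x hx0 hxs hN
    by_cases hgap : ∃ a b, x b + 2 ≤ x a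
    · obtain ⟨a, b, hab2⟩ := hgap
      exfalso
      have h4 : 4 ≤ (x a)^2 := by nlinarith [hx0 b]
      have hsum : (x a)^2 ≤ ∑ i, (x i)^2 :=
        Finset.single_le_sum (fun i _ => sq_nonneg (x i)) (mem_univ a)
      omega
    · push_neg at hgap
      exact (terminal_case d hd n x hxs (fun a b => by have := hgap a b; omega)).le
  | succ N ih =>
    intro x hx0 hxs hN
    by_cases hgap : ∃ a b, x b + 2 ≤ x a
    · obtain ⟨a, b, hab2⟩ := hgap
      have hab : a ≠ b := by rintro rfl; omega
      classical
      set x' := Function.update (Function.update x a (x a - 1)) b (x b + 1) with hx'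
      have hx'a : x' a = x a - 1 := by simp [hx', Function.update_of_ne hab]
      have hx'b : x' b = x b + 1 := by simp [hx']
      have hx'o : ∀ i, i ≠ a → i ≠ b → x' i = x i := fun i hia hib => by
        simp [hx', Function.update_of_ne hib, Function.update_of_ne hia]
      have hrest : ∑ i ∈ (univ : Finset (Fin d)) \ {a, b}, x' i
          = ∑ i ∈ (univ : Finset (Fin d)) \ {a, b}, x i := by
        apply Finset.sum_congr rfl
        intro i hi
        simp only [Finset.mem_sdiff, Finset.mem_univ, Finset.mem_insert,
          Finset.mem_singleton, true_and, not_or] at hi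
        exact hx'o i hi.1 hi.2
      have hrest2 : ∑ i ∈ (univ : Finset (Fin d)) \ {a, b}, (x' i)^2
          = ∑ i ∈ (univ : Finset (Fin d)) \ {a, b}, (x i)^2 := by
        apply Finset.sum_congr rfl
        intro i hi
        simp only [Finset.mem_sdiff, Finset.mem_univ, Finset.mem_insert,
          Finset.mem_singleton, true_and, not_or] at hi
        rw [hx'o i hi.1 hi.2]
      have hs1 := sum_pair_split a b hab x
      have hs1' := sum_pair_split a b hab x'
      have hq1 := sum_pair_split a b hab (fun i => (x i)^2)
      have hq1' := sum_pair_split a b hab (fun i => (x' i)^2)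
      have hsum' : ∑ i, x' i = n - 1 := by
        rw [hs1', hx'a, hx'b, hrest]
        rw [hs1] at hxs
        linarith
      have hx0' : ∀ i, 0 ≤ x' i := by
        intro i
        by_cases h1 : i = a
        · rw [h1, hx'a]; have := hx0 b; omega
        · by_cases h2 : i = b
          · rw [h2, hx'b]; have := hx0 b; omega
          · rw [hx'o i h1 h2]; exact hx0 i
      have hsq : ∑ i, (x' i)^2 ≤ (∑ i, (x i)^2) - 2 := by
        rw [hq1', hx'a, hx'b, hrest2, hq1]
        nlinarith
      have hNle : (∑ i, (x' i)^2).toNat ≤ N := by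
        have h0 : 0 ≤ ∑ i, (x' i)^2 := Finset.sum_nonneg fun i _ => sq_nonneg _
        have h0' : 0 ≤ ∑ i, (x i)^2 := Finset.sum_nonneg fun i _ => sq_nonneg _
        omega
      exact le_trans (Fs_smooth d x a b hab hx0 hab2) (ih x' hx0' hsum' hNle)
    · push_neg at hgap
      exact (terminal_case d hd n x hxs (fun a b => by have := hgap a b; omega)).le

theorem stmt_18 (d : ℕ) (hd : 0 < d) (n : ℤ) (hn : 1 ≤ n) :
    IsGreatest
      {q : ℚ | ∃ l : Fin d → ℤ, (∀ i, 1 ≤ l i) ∧ (∑ i, (l i - 1)) = n - 1 ∧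
        q = ∑ I : Finset (Fin d),
              (1 / (Nat.factorial I.card : ℚ)) * ∏ i ∈ I, ((l i - 1 : ℤ) : ℚ)}
      (∑ I : Finset (Fin d),
        (1 / (Nat.factorial I.card : ℚ)) *
          ∏ i ∈ I, (((n - 2 + ((i : ℕ) + 1)) / d : ℤ) : ℚ)) := by
  have hdz : (0:ℤ) < (d:ℤ) := by exact_mod_cast hd
  have hy0 : ∀ i : Fin d, 0 ≤ (n - 2 + ((i:ℕ) + 1)) / (d:ℤ) := by
    intro i
    apply Int.ediv_nonneg _ (le_of_lt hdz)
    have : (0:ℤ) ≤ ((i:ℕ):ℤ) := by positivity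
    omega
  have hysum : ∑ i : Fin d, (n - 2 + ((i:ℕ) + 1)) / (d:ℤ) = n - 1 := by
    rw [Finset.sum_congr rfl (fun (i : Fin d) _ => by
      rw [show n - 2 + (((i:ℕ):ℤ) + 1) = (n - 1) + ((i:ℕ):ℤ) by ring])]
    exact sum_balanced d hd (n - 1)
  constructor
  · refine ⟨fun i => (n - 2 + ((i:ℕ) + 1)) / (d:ℤ) + 1,
      fun i => by show 1 ≤ (n - 2 + ((i:ℕ) + 1)) / (d:ℤ) + 1; have := hy0 i; omega, ?_, ?_⟩
    · simpa using hysum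
    · apply Finset.sum_congr rfl
      intro I _
      congr 1
      apply Finset.prod_congr rfl
      intro i _
      norm_num
  · rintro q ⟨l, hl1, hlsum, rfl⟩
    have hkey := key_ineq d hd n (∑ i, (l i - 1)^2).toNat (fun i => l i - 1)
      (fun i => by show (0:ℤ) ≤ l i - 1; have := hl1 i; omega) hlsum le_rfl
    exact hkey
end
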